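/- Let ν_{0,0}, ν_{1,0}, ν_{∞,0}, q, p ∈ ℂ, set γ = ν_{0,0}+ν_{1,0}+ν_{∞,0}−1, a = ν_{1,0}−(2/3)γ, b = ν_{∞,0}−1−(2/3)γ, c = ν_{0,0}−(2/3)γ, f₁₄ = ν_{1,0}q+ν_{0,0}(q−1)−p, f₁₆ = ν_{1,0}+(ν_{∞,0}−1)(1−q)−p, f₄₆ = ν_{0,0}+(ν_{∞,0}−1)q+p, and assume γ ≠ 0 and f₁₄ ≠ 0. Define q̄ = q·f₁₆/f₁₄ and p̄ = (−γ f₁₄ q̄ + (3p−γ)f₁₄ − 3qpγ + 3qγν_{1,0})/(3f₁₄). Then p̄ = (a·f₁₄f₁₆ − b·f₁₆f₄₆ − c·f₁₄f₄₆)/(γ f₁₄); equivalently, γ·(−γ q f₁₆ + (3p−γ)f₁₄ − 3qpγ + 3qγν_{1,0}) = 3·(a·f₁₄f₁₆ − b·f₁₆f₄₆ − c·f₁₄f₄₆). Consequently, in homogeneous coordinates, (γ q f₁₆ : a f₁₄f₁₆ − b f₁₆f₄₆ − c f₁₄f₄₆ : γ f₁₄) = (q̄ : p̄ : 1) as points of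 ℙ²(ℂ). -/
import Mathlib


theorem stmt_15 (ν00 ν10 νinf0 q p γ a b c f14 f16 f46 qb pb : ℂ)
    (hγ : γ = ν00 + ν10 + νinf0 - 1)
    (ha : a = ν10 - (2 / 3) * γ)
    (hb : b = νinf0 - 1 - (2 / 3) * γ)
    (hc : c = ν00 - (2 / 3) * γ)
    (hf14 : f14 = ν10 * q + ν00 * (q - 1) - p)
    (hf16 : f16 = ν10 + (νinf0 - 1) * (1 - q) - p)
    (hf46 : f46 = ν00 + (νinf0 - 1) * q + p)
    (hγ0 : γ ≠ 0) (hf0 : f14 ≠ 0)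
    (hqb : qb = q * f16 / f14)
    (hpb : pb = (-γ * f14 * qb + (3 * p - γ) * f14 - 3 * q * p * γ + 3 * q * γ * ν10)
        / (3 * f14)) :
    pb = (a * f14 * f16 - b * f16 * f46 - c * f14 * f46) / (γ * f14) ∧
    γ * (-γ * q * f16 + (3 * p - γ) * f14 - 3 * q * p * γ + 3 * q * γ * ν10)
      = 3 * (a * f14 * f16 - b * f16 * f46 - c * f14 * f46) ∧
    Projectivization.mk ℂ
        (![γ * q * f16, a * f14 * f16 - b * f16 * f46 - c * f14 * f46, γ * f14])
        (fun hv => mul_ne_zero hγ0 hf0 (by simpa using congrFun hv 2))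
      = Projectivization.mk ℂ (![qb, pb, 1])
        (fun hv => one_ne_zero (α := ℂ) (by simpa using congrFun hv 2)) := by
  have key : γ * (-γ * q * f16 + (3 * p - γ) * f14 - 3 * q * p * γ + 3 * q * γ * ν10)
      = 3 * (a * f14 * f16 - b * f16 * f46 - c * f14 * f46) := by
    subst hγ ha hb hc hf14 hf16 hf46; ring
  have hqb' : f14 * qb = q * f16 := by
    rw [hqb]; field_simp
  have hpb' : pb = (a * f14 * f16 - b * f16 * f46 - c * f14 * f46) / (γ * f14) := by
    rw [hpb, div_eq_div_iff (by simpa using hf0) (mul_ne_zero hγ0 hf0)]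
    have : γ * f14 * qb = γ * (q * f16) := by rw [mul_assoc, hqb']
    linear_combination f14 * key + (-γ * γ * f14) * hqb'
  refine ⟨hpb', key, ?_⟩
  rw [Projectivization.mk_eq_mk_iff]
  refine ⟨Units.mk0 (γ * f14) (mul_ne_zero hγ0 hf0), ?_⟩
  funext i
  fin_cases i <;> simp [Units.smul_def]
  · linear_combination γ * hqb'
  · rw [hpb']; field_simp
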